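/- arXiv:2002.07630 — 6 statements merged into one kernel-verified Lean document; each statement's English description precedes it below -/
import Mathlib

section
/- Let D and S be n×n real symmetric positive semidefinite matrices, E a d×d real symmetric positive definite matrix, A an n×n real matrix, B an n×d real matrix, and C_1, …, C_p n×d real matrices. Set H = E + BᵀSB + Σ_{i=1}^p C_iᵀ S C_i and L = -H⁻¹ Bᵀ S A. Then the Riccati-type update S' = D + AᵀSA - LᵀHL (equivalently S' = D + AᵀSA - AᵀSB H⁻¹ BᵀSA) is symmetric positive semidefinite. -/
open Matrix

/-!
The normal equation `H L = -BᵀSA` for the gain lets one complete the square,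
`AᵀSA - LᵀHL = (A + BL)ᵀS(A + BL) + Lᵀ(H - BᵀSB)L`, and `H - BᵀSB = E + Σ CᵢᵀSCᵢ` is
positive semidefinite, so the update is a sum of positive semidefinite matrices.
-/

namespace Matrix

variable {m n k R : Type*} [Fintype m] [Fintype k] [Ring R] [StarRing R]

theorem riccati_complete_square {S : Matrix m m R} {A : Matrix m n R} {B : Matrix m k R}
    {H : Matrix k k R} {L : Matrix k n R} (hS : S.IsHermitian) (hH : H.IsHermitian)
    (hL : H * L = -(Bᴴ * S * A)) :
    Aᴴ * S * A - Lᴴ * H * L = (A + B * L)ᴴ * S * (A + B * L) + Lᴴ * (H - Bᴴ * S * B) * L := by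
  have hcross : Lᴴ * Bᴴ * S * A = -(Lᴴ * H * L) := by
    rw [Matrix.mul_assoc, Matrix.mul_assoc, ← Matrix.mul_assoc Bᴴ, ← neg_neg (Bᴴ * S * A), ← hL,
      Matrix.mul_neg, Matrix.mul_assoc]
  have hcross' : Aᴴ * S * B * L = -(Lᴴ * H * L) := by
    simpa [conjTranspose_mul, hS.eq, hH.eq, Matrix.mul_assoc] using congrArg conjTranspose hcross
  simp only [conjTranspose_add, conjTranspose_mul, Matrix.add_mul, Matrix.mul_add,
    Matrix.sub_mul, Matrix.mul_sub, ← Matrix.mul_assoc, hcross, hcross']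
  abel

end Matrix

/-- Riccati-type update preserves positive semidefiniteness:
with `H = E + BᵀSB + Σ_i C_iᵀSC_i` and `L = -H⁻¹BᵀSA`, the matrix
`S' = D + AᵀSA - LᵀHL` is symmetric positive semidefinite. -/
theorem riccati_update_posSemidef {n d p : ℕ}
    (D S : Matrix (Fin n) (Fin n) ℝ) (hD : D.PosSemidef) (hS : S.PosSemidef)
    (E : Matrix (Fin d) (Fin d) ℝ) (hE : E.PosDef)
    (A : Matrix (Fin n) (Fin n) ℝ) (B : Matrix (Fin n) (Fin d) ℝ)
    (C : Fin p → Matrix (Fin n) (Fin d) ℝ) :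
    let H := E + Bᵀ * S * B + ∑ i : Fin p, (C i)ᵀ * S * C i
    let L := -(H⁻¹ * Bᵀ * S * A)
    (D + Aᵀ * S * A - Lᵀ * H * L).PosSemidef := by
  intro H L
  have hCSC : (∑ i : Fin p, (C i)ᵀ * S * C i).PosSemidef :=
    posSemidef_sum _ fun i _ => by simpa using hS.conjTranspose_mul_mul_same (C i)
  have hBSB : (Bᵀ * S * B).PosSemidef := by simpa using hS.conjTranspose_mul_mul_same B
  have hH : H.PosDef := (hE.add_posSemidef hBSB).add_posSemidef hCSC
  have hgain : H * L = -(Bᵀ * S * A) := by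
    have := hH.isUnit.invertible
    simp only [L, Matrix.mul_neg, ← Matrix.mul_assoc, mul_inv_of_invertible, Matrix.one_mul]
  have hcomp : H - Bᵀ * S * B = E + ∑ i : Fin p, (C i)ᵀ * S * C i := by
    simp only [H]
    abel
  have hsquare := riccati_complete_square hS.isHermitian hH.isHermitian (by simpa using hgain)
  simp only [conjTranspose_eq_transpose_of_trivial, hcomp] at hsquare
  rw [add_sub_assoc, hsquare]
  have hclosed := hS.conjTranspose_mul_mul_same (A + B * L)
  have hgainCost := (hE.posSemidef.add hCSC).conjTranspose_mul_mul_same L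
  simp only [conjTranspose_eq_transpose_of_trivial] at hclosed hgainCost
  exact hD.add (hclosed.add hgainCost)
end

section
/- With the data and definitions of the preceding base-case statement (A, B⁰, B¹, S positive semidefinite, s, s̃, c_i, C_i⁰, C_i¹, D symmetric, E positive definite, d, e, d̃, the function J(x,u,w), H = E + (B⁰)ᵀSB⁰ + Σ_i (C_i⁰)ᵀSC_i⁰, and I•, L, M⁰), define s̃' = d̃ + s̃ + Σ_i c_iᵀS c_i - I•ᵀH I•, s' = d + Aᵀs - LᵀH I•, S' = D + AᵀSA - LᵀHL, r' = (B¹)ᵀs + Σ_i (C_i¹)ᵀS c_i - (M⁰)ᵀH I•, R̃' = AᵀSB¹ - LᵀH M⁰, and R' = (B¹)ᵀSB¹ + Σ_i (C_i¹)ᵀS C_i¹ - (M⁰)ᵀH M⁰. Then for every x ∈ ℝⁿ and w ∈ ℝ^d, with u* = I• + Lx + M⁰w, one has J(x, u*, w) = s̃' + 2xᵀs' + xᵀS'x + 2wᵀr' + 2xᵀR̃'w + wᵀR'w. -/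
/-!
For fixed `x` and `w` the cost is quadratic in the control:
`J(x, u, w) = J(x, 0, w) + 2 uᵀt + uᵀHu`, with `t` affine in `(x, w)`. The control
`u* = I• + Lx + M⁰w` is exactly `-H⁻¹t`, so `Hu* = -t` and `J(x, u*, w) = J(x, 0, w) - u*ᵀHu*`.
Expanding `J(x, 0, w)` and the quadratic form of the affine map `(x, w) ↦ u*` in `x` and `w`
gives the updated coefficients.
-/

open Matrix

section QuadraticForm

variable {R ι κ ω : Type*} [CommRing R] [Fintype ι] [Fintype κ] [Fintype ω]

lemma Matrix.IsSymm.dotProduct_mulVec_comm {S : Matrix ι ι R} (hS : S.IsSymm) (a b : ι → R) :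
    a ⬝ᵥ (S *ᵥ b) = b ⬝ᵥ (S *ᵥ a) := by
  rw [← dotProduct_transpose_mulVec, hS.eq]

lemma Matrix.IsSymm.add_dotProduct_mulVec_add {S : Matrix ι ι R} (hS : S.IsSymm) (a b : ι → R) :
    (a + b) ⬝ᵥ (S *ᵥ (a + b)) = a ⬝ᵥ (S *ᵥ a) + 2 * (b ⬝ᵥ (S *ᵥ a)) + b ⬝ᵥ (S *ᵥ b) := by
  rw [mulVec_add, dotProduct_add, add_dotProduct, add_dotProduct, hS.dotProduct_mulVec_comm a b]
  ring

lemma dotProduct_transpose_mulVec_eq (P : Matrix ι κ R) (x : κ → R) (v : ι → R) :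
    x ⬝ᵥ (Pᵀ *ᵥ v) = (P *ᵥ x) ⬝ᵥ v := by
  rw [dotProduct_transpose_mulVec, dotProduct_comm]

lemma mulVec_dotProduct_mulVec_mulVec (P : Matrix ι κ R) (Q : Matrix ι ι R) (N : Matrix ι ω R)
    (x : κ → R) (w : ω → R) : (P *ᵥ x) ⬝ᵥ (Q *ᵥ (N *ᵥ w)) = x ⬝ᵥ ((Pᵀ * Q * N) *ᵥ w) := by
  rw [← mulVec_mulVec, ← mulVec_mulVec, dotProduct_transpose_mulVec_eq]

lemma Matrix.IsSymm.affine_dotProduct_mulVec_affine {Q : Matrix ι ι R} (hQ : Q.IsSymm)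
    (a : ι → R) (P : Matrix ι κ R) (N : Matrix ι ω R) (x : κ → R) (w : ω → R) :
    (a + P *ᵥ x + N *ᵥ w) ⬝ᵥ (Q *ᵥ (a + P *ᵥ x + N *ᵥ w)) =
      a ⬝ᵥ (Q *ᵥ a) + 2 * (x ⬝ᵥ (Pᵀ *ᵥ (Q *ᵥ a))) + x ⬝ᵥ ((Pᵀ * Q * P) *ᵥ x)
        + 2 * (w ⬝ᵥ (Nᵀ *ᵥ (Q *ᵥ a))) + 2 * (x ⬝ᵥ ((Pᵀ * Q * N) *ᵥ w))
        + w ⬝ᵥ ((Nᵀ * Q * N) *ᵥ w) := by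
  rw [hQ.add_dotProduct_mulVec_add, hQ.add_dotProduct_mulVec_add, mulVec_add, dotProduct_add,
    ← mulVec_dotProduct_mulVec_mulVec, ← mulVec_dotProduct_mulVec_mulVec,
    ← mulVec_dotProduct_mulVec_mulVec, dotProduct_transpose_mulVec, dotProduct_transpose_mulVec,
    dotProduct_comm (Q *ᵥ a), dotProduct_comm (Q *ᵥ a), hQ.dotProduct_mulVec_comm (N *ᵥ w) (P *ᵥ x)]
  ring

lemma mulVec_neg_inv_mulVec [DecidableEq κ] {H : Matrix κ κ R} (hH : IsUnit H.det) (t : κ → R) :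
    H *ᵥ -(H⁻¹ *ᵥ t) = -t := by
  rw [mulVec_neg, mulVec_mulVec, mul_nonsing_inv H hH, one_mulVec]

end QuadraticForm

section StageCost

variable {R ι κ ω π : Type*} [CommRing R] [Fintype ι] [Fintype κ] [Fintype ω] [Fintype π]
  (A : Matrix ι ι R) (B0 : Matrix ι κ R) (B1 : Matrix ι ω R) (S : Matrix ι ι R) (svec : ι → R)
  (stil : R) (c : π → ι → R) (C0 : π → Matrix ι κ R) (C1 : π → Matrix ι ω R) (D : Matrix ι ι R)
  (E : Matrix κ κ R) (dvec : ι → R) (evec : κ → R) (dtil : R)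

def stageCost (x : ι → R) (u : κ → R) (w : ω → R) : R :=
  dtil + 2 * (x ⬝ᵥ dvec) + x ⬝ᵥ (D *ᵥ x) + 2 * (u ⬝ᵥ evec) + u ⬝ᵥ (E *ᵥ u)
    + stil + 2 * ((A *ᵥ x + B0 *ᵥ u + B1 *ᵥ w) ⬝ᵥ svec)
    + (A *ᵥ x + B0 *ᵥ u + B1 *ᵥ w) ⬝ᵥ (S *ᵥ (A *ᵥ x + B0 *ᵥ u + B1 *ᵥ w))
    + ∑ i, (c i + C0 i *ᵥ u + C1 i *ᵥ w) ⬝ᵥ (S *ᵥ (c i + C0 i *ᵥ u + C1 i *ᵥ w))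

def stageHessian : Matrix κ κ R := E + B0ᵀ * S * B0 + ∑ i, (C0 i)ᵀ * S * C0 i

/-- Half the gradient of `stageCost` in `u` at `u = 0`. -/
def stageGradient (x : ι → R) (w : ω → R) : κ → R :=
  evec + B0ᵀ *ᵥ svec + ∑ i, (C0 i)ᵀ *ᵥ (S *ᵥ c i) + (B0ᵀ * S * A) *ᵥ x
    + (B0ᵀ * S * B1 + ∑ i, (C0 i)ᵀ * S * C1 i) *ᵥ w

variable {A B0 B1 S svec stil c C0 C1 D E dvec evec dtil}

lemma stageCost_eq_stageCost_zero_add (hS : S.IsSymm) (x : ι → R) (u : κ → R) (w : ω → R) :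
    stageCost A B0 B1 S svec stil c C0 C1 D E dvec evec dtil x u w =
      stageCost A B0 B1 S svec stil c C0 C1 D E dvec evec dtil x 0 w
        + 2 * (u ⬝ᵥ stageGradient A B0 B1 S svec c C0 C1 evec x w)
        + u ⬝ᵥ (stageHessian B0 S C0 E *ᵥ u) := by
  have hx : A *ᵥ x + B0 *ᵥ u + B1 *ᵥ w = (A *ᵥ x + B1 *ᵥ w) + B0 *ᵥ u := add_right_comm ..
  have hc : ∀ i, c i + C0 i *ᵥ u + C1 i *ᵥ w = (c i + C1 i *ᵥ w) + C0 i *ᵥ u :=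
    fun i => add_right_comm ..
  simp only [stageCost, stageGradient, stageHessian, hx, hc, hS.add_dotProduct_mulVec_add,
    mulVec_zero, add_zero, zero_dotProduct, dotProduct_zero, mul_zero]
  simp only [add_mulVec, sum_mulVec, mulVec_add, dotProduct_add, add_dotProduct, dotProduct_sum,
    ← mulVec_dotProduct_mulVec_mulVec, dotProduct_transpose_mulVec_eq, mul_add,
    Finset.sum_add_distrib, Finset.mul_sum]
  ring

lemma stageCost_zero_sub_eq (hS : S.IsSymm) {Q : Matrix κ κ R} (hQ : Q.IsSymm) (a : κ → R)
    (P : Matrix κ ι R) (N : Matrix κ ω R) (x : ι → R) (w : ω → R) :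
    stageCost A B0 B1 S svec stil c C0 C1 D E dvec evec dtil x 0 w
        - (a + P *ᵥ x + N *ᵥ w) ⬝ᵥ (Q *ᵥ (a + P *ᵥ x + N *ᵥ w)) =
      (dtil + stil + (∑ i, c i ⬝ᵥ (S *ᵥ c i)) - a ⬝ᵥ (Q *ᵥ a))
        + 2 * (x ⬝ᵥ (dvec + Aᵀ *ᵥ svec - Pᵀ *ᵥ (Q *ᵥ a)))
        + x ⬝ᵥ ((D + Aᵀ * S * A - Pᵀ * Q * P) *ᵥ x)
        + 2 * (w ⬝ᵥ (B1ᵀ *ᵥ svec + (∑ i, (C1 i)ᵀ *ᵥ (S *ᵥ c i)) - Nᵀ *ᵥ (Q *ᵥ a)))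
        + 2 * (x ⬝ᵥ ((Aᵀ * S * B1 - Pᵀ * Q * N) *ᵥ w))
        + w ⬝ᵥ ((B1ᵀ * S * B1 + (∑ i, (C1 i)ᵀ * S * C1 i) - Nᵀ * Q * N) *ᵥ w) := by
  rw [hQ.affine_dotProduct_mulVec_affine]
  simp only [stageCost, hS.add_dotProduct_mulVec_add, mulVec_zero, add_zero, zero_dotProduct,
    mul_zero]
  simp only [add_mulVec, sub_mulVec, sum_mulVec, dotProduct_add, add_dotProduct,
    dotProduct_sub, dotProduct_sum, ← mulVec_dotProduct_mulVec_mulVec,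
    dotProduct_transpose_mulVec_eq, mul_add, mul_sub, Finset.sum_add_distrib, Finset.mul_sum]
  rw [hS.dotProduct_mulVec_comm (A *ᵥ x) (B1 *ᵥ w)]
  ring

end StageCost

lemma stageHessian_posDef {ι κ π : Type*} [Fintype ι] [Fintype κ] [Fintype π]
    {B0 : Matrix ι κ ℝ} {S : Matrix ι ι ℝ} {C0 : π → Matrix ι κ ℝ} {E : Matrix κ κ ℝ}
    (hS : S.PosSemidef) (hE : E.PosDef) : (stageHessian B0 S C0 E).PosDef := by
  have hSandwich (M : Matrix ι κ ℝ) : (Mᵀ * S * M).PosSemidef := by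
    simpa using hS.conjTranspose_mul_mul_same M
  exact (hE.add_posSemidef (hSandwich B0)).add_posSemidef
    (posSemidef_sum _ fun i _ => hSandwich (C0 i))

theorem base_case_cost_update_general {n d p : ℕ}
    (A : Matrix (Fin n) (Fin n) ℝ) (B0 B1 : Matrix (Fin n) (Fin d) ℝ)
    (S : Matrix (Fin n) (Fin n) ℝ) (hS : S.PosSemidef)
    (svec : Fin n → ℝ) (stil : ℝ)
    (c : Fin p → Fin n → ℝ) (C0 C1 : Fin p → Matrix (Fin n) (Fin d) ℝ)
    (D : Matrix (Fin n) (Fin n) ℝ)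
    (E : Matrix (Fin d) (Fin d) ℝ) (hE : E.PosDef)
    (dvec : Fin n → ℝ) (evec : Fin d → ℝ) (dtil : ℝ) :
    let J : (Fin n → ℝ) → (Fin d → ℝ) → (Fin d → ℝ) → ℝ := fun x u w =>
      dtil + 2 * (x ⬝ᵥ dvec) + x ⬝ᵥ (D *ᵥ x) + 2 * (u ⬝ᵥ evec) + u ⬝ᵥ (E *ᵥ u)
        + stil + 2 * ((A *ᵥ x + B0 *ᵥ u + B1 *ᵥ w) ⬝ᵥ svec)
        + (A *ᵥ x + B0 *ᵥ u + B1 *ᵥ w) ⬝ᵥ (S *ᵥ (A *ᵥ x + B0 *ᵥ u + B1 *ᵥ w))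
        + ∑ i : Fin p, (c i + C0 i *ᵥ u + C1 i *ᵥ w) ⬝ᵥ
            (S *ᵥ (c i + C0 i *ᵥ u + C1 i *ᵥ w))
    let H := E + B0ᵀ * S * B0 + ∑ i : Fin p, (C0 i)ᵀ * S * C0 i
    let Istar : Fin d → ℝ :=
      -(H⁻¹ *ᵥ (evec + B0ᵀ *ᵥ svec + ∑ i : Fin p, (C0 i)ᵀ *ᵥ (S *ᵥ c i)))
    let L := -(H⁻¹ * B0ᵀ * S * A)
    let M0 := -(H⁻¹ * (B0ᵀ * S * B1 + ∑ i : Fin p, (C0 i)ᵀ * S * C1 i))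
    let stil' : ℝ := dtil + stil + (∑ i : Fin p, c i ⬝ᵥ (S *ᵥ c i))
      - Istar ⬝ᵥ (H *ᵥ Istar)
    let svec' : Fin n → ℝ := dvec + Aᵀ *ᵥ svec - Lᵀ *ᵥ (H *ᵥ Istar)
    let S' := D + Aᵀ * S * A - Lᵀ * H * L
    let r' : Fin d → ℝ := B1ᵀ *ᵥ svec + (∑ i : Fin p, (C1 i)ᵀ *ᵥ (S *ᵥ c i))
      - M0ᵀ *ᵥ (H *ᵥ Istar)
    let Rt' := Aᵀ * S * B1 - Lᵀ * H * M0
    let R' := B1ᵀ * S * B1 + (∑ i : Fin p, (C1 i)ᵀ * S * C1 i) - M0ᵀ * H * M0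
    ∀ (x : Fin n → ℝ) (w : Fin d → ℝ),
      J x (Istar + L *ᵥ x + M0 *ᵥ w) w =
        stil' + 2 * (x ⬝ᵥ svec') + x ⬝ᵥ (S' *ᵥ x) + 2 * (w ⬝ᵥ r')
          + 2 * (x ⬝ᵥ (Rt' *ᵥ w)) + w ⬝ᵥ (R' *ᵥ w) := by
  intro J H Istar L M0 stil' svec' S' r' Rt' R' x w
  have hSsym : S.IsSymm := isHermitian_iff_isSymm.mp hS.isHermitian
  have hH : H.PosDef := stageHessian_posDef hS hE
  have hHsym : H.IsSymm := isHermitian_iff_isSymm.mp hH.isHermitian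
  set t := stageGradient A B0 B1 S svec c C0 C1 evec x w
  set u := Istar + L *ᵥ x + M0 *ᵥ w with hu
  have hHu : H *ᵥ u = -t := by
    have hu' : u = -(H⁻¹ *ᵥ t) := by
      simp only [hu, Istar, L, M0, t, stageGradient, neg_mulVec, mulVec_add, ← mulVec_mulVec,
        Matrix.mul_assoc]
      abel
    rw [hu', mulVec_neg_inv_mulVec ((isUnit_iff_isUnit_det H).mp hH.isUnit)]
  calc J x u w = J x 0 w + 2 * (u ⬝ᵥ t) + u ⬝ᵥ (H *ᵥ u) :=
        stageCost_eq_stageCost_zero_add hSsym x u w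
    _ = J x 0 w - u ⬝ᵥ (H *ᵥ u) := by rw [hHu, dotProduct_neg]; ring
    _ = _ := stageCost_zero_sub_eq hSsym hHsym Istar L M0 x w

/-- Formula (13) of Theorem 1 (base case k = K-1): substituting the
optimal control `u* = I• + Lx + M⁰w` into `J` yields the stated quadratic form in
`(x, w)` with the updated coefficients. -/
theorem base_case_cost_update {n d p : ℕ}
    (A : Matrix (Fin n) (Fin n) ℝ) (B0 B1 : Matrix (Fin n) (Fin d) ℝ)
    (S : Matrix (Fin n) (Fin n) ℝ) (hS : S.PosSemidef)
    (svec : Fin n → ℝ) (stil : ℝ)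
    (c : Fin p → Fin n → ℝ) (C0 C1 : Fin p → Matrix (Fin n) (Fin d) ℝ)
    (D : Matrix (Fin n) (Fin n) ℝ) (hD : D.IsSymm)
    (E : Matrix (Fin d) (Fin d) ℝ) (hE : E.PosDef)
    (dvec : Fin n → ℝ) (evec : Fin d → ℝ) (dtil : ℝ) :
    let J : (Fin n → ℝ) → (Fin d → ℝ) → (Fin d → ℝ) → ℝ := fun x u w =>
      dtil + 2 * (x ⬝ᵥ dvec) + x ⬝ᵥ (D *ᵥ x) + 2 * (u ⬝ᵥ evec) + u ⬝ᵥ (E *ᵥ u)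
        + stil + 2 * ((A *ᵥ x + B0 *ᵥ u + B1 *ᵥ w) ⬝ᵥ svec)
        + (A *ᵥ x + B0 *ᵥ u + B1 *ᵥ w) ⬝ᵥ (S *ᵥ (A *ᵥ x + B0 *ᵥ u + B1 *ᵥ w))
        + ∑ i : Fin p, (c i + C0 i *ᵥ u + C1 i *ᵥ w) ⬝ᵥ
            (S *ᵥ (c i + C0 i *ᵥ u + C1 i *ᵥ w))
    let H := E + B0ᵀ * S * B0 + ∑ i : Fin p, (C0 i)ᵀ * S * C0 i
    let Istar : Fin d → ℝ :=
      -(H⁻¹ *ᵥ (evec + B0ᵀ *ᵥ svec + ∑ i : Fin p, (C0 i)ᵀ *ᵥ (S *ᵥ c i)))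
    let L := -(H⁻¹ * B0ᵀ * S * A)
    let M0 := -(H⁻¹ * (B0ᵀ * S * B1 + ∑ i : Fin p, (C0 i)ᵀ * S * C1 i))
    let stil' : ℝ := dtil + stil + (∑ i : Fin p, c i ⬝ᵥ (S *ᵥ c i))
      - Istar ⬝ᵥ (H *ᵥ Istar)
    let svec' : Fin n → ℝ := dvec + Aᵀ *ᵥ svec - Lᵀ *ᵥ (H *ᵥ Istar)
    let S' := D + Aᵀ * S * A - Lᵀ * H * L
    let r' : Fin d → ℝ := B1ᵀ *ᵥ svec + (∑ i : Fin p, (C1 i)ᵀ *ᵥ (S *ᵥ c i))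
      - M0ᵀ *ᵥ (H *ᵥ Istar)
    let Rt' := Aᵀ * S * B1 - Lᵀ * H * M0
    let R' := B1ᵀ * S * B1 + (∑ i : Fin p, (C1 i)ᵀ * S * C1 i) - M0ᵀ * H * M0
    ∀ (x : Fin n → ℝ) (w : Fin d → ℝ),
      J x (Istar + L *ᵥ x + M0 *ᵥ w) w =
        stil' + 2 * (x ⬝ᵥ svec') + x ⬝ᵥ (S' *ᵥ x) + 2 * (w ⬝ᵥ r')
          + 2 * (x ⬝ᵥ (Rt' *ᵥ w)) + w ⬝ᵥ (R' *ᵥ w) :=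
  base_case_cost_update_general A B0 B1 S hS svec stil c C0 C1 D E hE dvec evec dtil
end

section
/- Let m ≥ 1. Let A be n×n, B⁰ and B¹ n×d real matrices; S an n×n real symmetric positive semidefinite matrix, s ∈ ℝⁿ, s̃ ∈ ℝ; c_i ∈ ℝⁿ, C_i⁰, C_i¹ n×d real matrices (i = 1,…,p); D n×n symmetric, E d×d symmetric positive definite, d ∈ ℝⁿ, e ∈ ℝ^d, d̃ ∈ ℝ; and r^i ∈ ℝ^d, R̃^i n×d, R^{ij} d×d for i,j = 0,…,m-1, with (R^{ij})ᵀ = R^{ji}. For x ∈ ℝⁿ, u ∈ ℝ^d, and w_0,…,w_m ∈ ℝ^d, set x⁺ = Ax + B⁰u + B¹w_0 and define J(x,u,w_0,…,w_m) = d̃ + 2xᵀd + xᵀDx + 2uᵀe + uᵀEu + s̃ + 2(x⁺)ᵀs + (x⁺)ᵀS x⁺ + Σ_{i=1}^p (c_i + C_i⁰u + C_i¹w_0)ᵀS(c_i + C_i⁰u + C_i¹w_0) + 2Σ_{i=0}^{m-1} w_{i+1}ᵀ r^i + 2(x⁺)ᵀ Σ_{i=0}^{m-1} R̃^i w_{i+1}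 + Σ_{i,j=0}^{m-1} w_{i+1}ᵀ R^{ij} w_{j+1}. Set H = E + (B⁰)ᵀSB⁰ + Σ_i (C_i⁰)ᵀS C_i⁰. Then H is symmetric positive definite and, for every fixed x, w_0,…,w_m, the function u ↦ J(x,u,w_0,…,w_m) has the unique global minimizer u* = I• + Lx + Σ_{i=0}^m M^i w_i, where I• = -H⁻¹(e + (B⁰)ᵀs + Σ_i (C_i⁰)ᵀS c_i), L = -H⁻¹(B⁰)ᵀSA, M⁰ = -H⁻¹((B⁰)ᵀSB¹ + Σ_i (C_i⁰)ᵀS C_i¹), and M^i = -H⁻¹(B⁰)ᵀR̃^{i-1} for i = 1,…,m. -/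
/-!
With `a = Ax + B¹w₀` and `W = Σ R̃ⁱ wᵢ₊₁`, every term of `J` is affine or quadratic in `u`,
so `J(u) = uᵀHu + 2uᵀb + J(0)` with `b = e + (B⁰)ᵀ(s + Sa + W) + Σ (Cᵢ⁰)ᵀS(cᵢ + Cᵢ¹w₀)`.
`H` is positive definite as `E` plus congruences of `S ⪰ 0`, and the proposed feedback law is
exactly `u* = -H⁻¹b`, i.e. `Hu* = -b`. Completing the square then gives
`J(u) - J(u*) = (u - u*)ᵀH(u - u*) > 0` for `u ≠ u*`.
-/

open Matrix

namespace Matrix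

variable {ι κ R : Type*} [Fintype ι] [Fintype κ]

lemma dotProduct_mulVec_add_mulVec_self [CommRing R] {S : Matrix κ κ R} (hS : S.IsSymm)
    (N : Matrix κ ι R) (a : κ → R) (u : ι → R) :
    (a + N *ᵥ u) ⬝ᵥ (S *ᵥ (a + N *ᵥ u))
      = a ⬝ᵥ (S *ᵥ a) + 2 * (u ⬝ᵥ (Nᵀ *ᵥ (S *ᵥ a))) + u ⬝ᵥ ((Nᵀ * S * N) *ᵥ u) := by
  have cross_left : (N *ᵥ u) ⬝ᵥ (S *ᵥ a) = u ⬝ᵥ (Nᵀ *ᵥ (S *ᵥ a)) := by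
    rw [dotProduct_transpose_mulVec, dotProduct_comm]
  have cross_right : a ⬝ᵥ (S *ᵥ (N *ᵥ u)) = u ⬝ᵥ (Nᵀ *ᵥ (S *ᵥ a)) := by
    rw [dotProduct_transpose_mulVec, ← dotProduct_transpose_mulVec S, hS.eq, dotProduct_comm]
  have square : (N *ᵥ u) ⬝ᵥ (S *ᵥ (N *ᵥ u)) = u ⬝ᵥ ((Nᵀ * S * N) *ᵥ u) := by
    rw [← mulVec_mulVec, ← mulVec_mulVec, dotProduct_transpose_mulVec, dotProduct_comm]
  simp only [mulVec_add, dotProduct_add, add_dotProduct, cross_left, cross_right, square]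
  ring

lemma add_mulVec_dotProduct [CommRing R] (N : Matrix κ ι R) (a s : κ → R) (u : ι → R) :
    (a + N *ᵥ u) ⬝ᵥ s = a ⬝ᵥ s + u ⬝ᵥ (Nᵀ *ᵥ s) := by
  rw [add_dotProduct, dotProduct_transpose_mulVec, dotProduct_comm s]

lemma PosDef.dotProduct_mulVec_add_two_mul_dotProduct_lt {H : Matrix ι ι ℝ} (hH : H.PosDef)
    {b u₀ u : ι → ℝ} (hu₀ : H *ᵥ u₀ = -b) (hu : u ≠ u₀) :
    u₀ ⬝ᵥ (H *ᵥ u₀) + 2 * (u₀ ⬝ᵥ b) < u ⬝ᵥ (H *ᵥ u) + 2 * (u ⬝ᵥ b) := by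
  have hsymm : Hᵀ = H := (isHermitian_iff_isSymm.mp hH.isHermitian).eq
  have square : (u - u₀) ⬝ᵥ (H *ᵥ (u - u₀))
      = u ⬝ᵥ (H *ᵥ u) + 2 * (u ⬝ᵥ b) - (u₀ ⬝ᵥ (H *ᵥ u₀) + 2 * (u₀ ⬝ᵥ b)) := by
    have cross : u₀ ⬝ᵥ (H *ᵥ u) = u ⬝ᵥ (H *ᵥ u₀) := by
      rw [← dotProduct_transpose_mulVec, hsymm]
    simp only [mulVec_sub, dotProduct_sub, sub_dotProduct, cross, hu₀, dotProduct_neg]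
    ring
  have hpos := hH.dotProduct_mulVec_pos (sub_ne_zero.mpr hu)
  rw [star_trivial] at hpos
  linarith

end Matrix

theorem case1_optimal_control_general {n d p m : ℕ}
    (A : Matrix (Fin n) (Fin n) ℝ) (B0 B1 : Matrix (Fin n) (Fin d) ℝ)
    (S : Matrix (Fin n) (Fin n) ℝ) (hS : S.PosSemidef)
    (svec : Fin n → ℝ) (stil : ℝ)
    (c : Fin p → Fin n → ℝ) (C0 C1 : Fin p → Matrix (Fin n) (Fin d) ℝ)
    (D : Matrix (Fin n) (Fin n) ℝ)
    (E : Matrix (Fin d) (Fin d) ℝ) (hE : E.PosDef)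
    (dvec : Fin n → ℝ) (evec : Fin d → ℝ) (dtil : ℝ)
    (r : Fin m → Fin d → ℝ) (Rt : Fin m → Matrix (Fin n) (Fin d) ℝ)
    (R : Fin m → Fin m → Matrix (Fin d) (Fin d) ℝ) :
    let J : (Fin n → ℝ) → (Fin d → ℝ) → (Fin (m + 1) → Fin d → ℝ) → ℝ := fun x u w =>
      dtil + 2 * (x ⬝ᵥ dvec) + x ⬝ᵥ (D *ᵥ x) + 2 * (u ⬝ᵥ evec) + u ⬝ᵥ (E *ᵥ u)
        + stil + 2 * ((A *ᵥ x + B0 *ᵥ u + B1 *ᵥ w 0) ⬝ᵥ svec)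
        + (A *ᵥ x + B0 *ᵥ u + B1 *ᵥ w 0) ⬝ᵥ (S *ᵥ (A *ᵥ x + B0 *ᵥ u + B1 *ᵥ w 0))
        + ∑ i : Fin p, (c i + C0 i *ᵥ u + C1 i *ᵥ w 0) ⬝ᵥ
            (S *ᵥ (c i + C0 i *ᵥ u + C1 i *ᵥ w 0))
        + 2 * ∑ i : Fin m, w i.succ ⬝ᵥ r i
        + 2 * ((A *ᵥ x + B0 *ᵥ u + B1 *ᵥ w 0) ⬝ᵥ ∑ i : Fin m, Rt i *ᵥ w i.succ)
        + ∑ i : Fin m, ∑ j : Fin m, w i.succ ⬝ᵥ (R i j *ᵥ w j.succ)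
    let H := E + B0ᵀ * S * B0 + ∑ i : Fin p, (C0 i)ᵀ * S * C0 i
    let Istar : Fin d → ℝ :=
      -(H⁻¹ *ᵥ (evec + B0ᵀ *ᵥ svec + ∑ i : Fin p, (C0 i)ᵀ *ᵥ (S *ᵥ c i)))
    let L := -(H⁻¹ * B0ᵀ * S * A)
    let M0 := -(H⁻¹ * (B0ᵀ * S * B1 + ∑ i : Fin p, (C0 i)ᵀ * S * C1 i))
    -- `M i` is the matrix `M^{i+1} = -H⁻¹(B⁰)ᵀR̃^i` for `i = 0,…,m-1`
    let M : Fin m → Matrix (Fin d) (Fin d) ℝ := fun i => -(H⁻¹ * (B0ᵀ * Rt i))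
    H.PosDef ∧ ∀ (x : Fin n → ℝ) (w : Fin (m + 1) → Fin d → ℝ),
      ∀ u : Fin d → ℝ,
        u ≠ Istar + L *ᵥ x + M0 *ᵥ w 0 + ∑ i : Fin m, M i *ᵥ w i.succ →
        J x (Istar + L *ᵥ x + M0 *ᵥ w 0 + ∑ i : Fin m, M i *ᵥ w i.succ) w < J x u w := by
  intro J H Istar L M0 M
  have hS_symm : S.IsSymm := isHermitian_iff_isSymm.mp hS.isHermitian
  have hH : H.PosDef :=
    (hE.add_posSemidef (hS.conjTranspose_mul_mul_same B0)).add_posSemidef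
      (posSemidef_sum _ fun i _ => hS.conjTranspose_mul_mul_same (C0 i))
  refine ⟨hH, fun x w u hu => ?_⟩
  set a := A *ᵥ x + B1 *ᵥ w 0 with ha
  set W := ∑ i : Fin m, Rt i *ᵥ w i.succ with hW
  set b := evec + B0ᵀ *ᵥ (svec + S *ᵥ a + W)
    + ∑ i : Fin p, (C0 i)ᵀ *ᵥ (S *ᵥ (c i + C1 i *ᵥ w 0))
  have hcrit : H *ᵥ (Istar + L *ᵥ x + M0 *ᵥ w 0 + ∑ i : Fin m, M i *ᵥ w i.succ) = -b := by
    have hHinv : H * H⁻¹ = 1 := mul_nonsing_inv H (isUnit_iff_isUnit_det H |>.mp hH.isUnit)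
    simp only [Istar, L, M0, M, b, a, W, mulVec_add, add_mulVec, mulVec_neg, neg_mulVec,
      mulVec_sum, sum_mulVec, mulVec_mulVec, ← Matrix.mul_assoc, hHinv, Matrix.one_mul,
      one_mulVec, Finset.sum_neg_distrib, Finset.sum_add_distrib]
    abel
  have hJ : ∀ v, J x v w = v ⬝ᵥ (H *ᵥ v) + 2 * (v ⬝ᵥ b) + J x 0 w := by
    intro v
    -- move the `u`-summand last, so that the affine expansions in `u` apply
    simp only [J, add_right_comm (A *ᵥ x) (B0 *ᵥ _), add_right_comm (c _) (C0 _ *ᵥ _)]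
    simp only [← ha, ← hW, dotProduct_mulVec_add_mulVec_self hS_symm, add_mulVec_dotProduct]
    simp only [H, b, add_mulVec, sum_mulVec, mulVec_add, dotProduct_add, dotProduct_sum,
      Finset.sum_add_distrib, ← Finset.mul_sum, zero_dotProduct, mul_zero, add_zero]
    ring
  rw [hJ, hJ u]
  exact add_lt_add_left (hH.dotProduct_mulVec_add_two_mul_dotProduct_lt hcrit hu) _

/-- Case 1 (K-l-1 < k ≤ K-1, m = K-k ≥ 1) of the inductive step of
Theorem 1: `H` is symmetric positive definite and `u ↦ J(x,u,w_0,…,w_m)` has the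
unique global minimizer `u* = I• + Lx + Σ_{i=0}^m M^i w_i`, where `M^i = -H⁻¹(B⁰)ᵀR̃^{i-1}`
for `i = 1,…,m`. -/
theorem case1_optimal_control {n d p m : ℕ} (hm : 1 ≤ m)
    (A : Matrix (Fin n) (Fin n) ℝ) (B0 B1 : Matrix (Fin n) (Fin d) ℝ)
    (S : Matrix (Fin n) (Fin n) ℝ) (hS : S.PosSemidef)
    (svec : Fin n → ℝ) (stil : ℝ)
    (c : Fin p → Fin n → ℝ) (C0 C1 : Fin p → Matrix (Fin n) (Fin d) ℝ)
    (D : Matrix (Fin n) (Fin n) ℝ) (hD : D.IsSymm)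
    (E : Matrix (Fin d) (Fin d) ℝ) (hE : E.PosDef)
    (dvec : Fin n → ℝ) (evec : Fin d → ℝ) (dtil : ℝ)
    (r : Fin m → Fin d → ℝ) (Rt : Fin m → Matrix (Fin n) (Fin d) ℝ)
    (R : Fin m → Fin m → Matrix (Fin d) (Fin d) ℝ)
    (hR : ∀ i j : Fin m, (R i j)ᵀ = R j i) :
    let J : (Fin n → ℝ) → (Fin d → ℝ) → (Fin (m + 1) → Fin d → ℝ) → ℝ := fun x u w =>
      dtil + 2 * (x ⬝ᵥ dvec) + x ⬝ᵥ (D *ᵥ x) + 2 * (u ⬝ᵥ evec) + u ⬝ᵥ (E *ᵥ u)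
        + stil + 2 * ((A *ᵥ x + B0 *ᵥ u + B1 *ᵥ w 0) ⬝ᵥ svec)
        + (A *ᵥ x + B0 *ᵥ u + B1 *ᵥ w 0) ⬝ᵥ (S *ᵥ (A *ᵥ x + B0 *ᵥ u + B1 *ᵥ w 0))
        + ∑ i : Fin p, (c i + C0 i *ᵥ u + C1 i *ᵥ w 0) ⬝ᵥ
            (S *ᵥ (c i + C0 i *ᵥ u + C1 i *ᵥ w 0))
        + 2 * ∑ i : Fin m, w i.succ ⬝ᵥ r i
        + 2 * ((A *ᵥ x + B0 *ᵥ u + B1 *ᵥ w 0) ⬝ᵥ ∑ i : Fin m, Rt i *ᵥ w i.succ)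
        + ∑ i : Fin m, ∑ j : Fin m, w i.succ ⬝ᵥ (R i j *ᵥ w j.succ)
    let H := E + B0ᵀ * S * B0 + ∑ i : Fin p, (C0 i)ᵀ * S * C0 i
    let Istar : Fin d → ℝ :=
      -(H⁻¹ *ᵥ (evec + B0ᵀ *ᵥ svec + ∑ i : Fin p, (C0 i)ᵀ *ᵥ (S *ᵥ c i)))
    let L := -(H⁻¹ * B0ᵀ * S * A)
    let M0 := -(H⁻¹ * (B0ᵀ * S * B1 + ∑ i : Fin p, (C0 i)ᵀ * S * C1 i))
    -- `M i` is the matrix `M^{i+1} = -H⁻¹(B⁰)ᵀR̃^i` for `i = 0,…,m-1`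
    let M : Fin m → Matrix (Fin d) (Fin d) ℝ := fun i => -(H⁻¹ * (B0ᵀ * Rt i))
    H.PosDef ∧ ∀ (x : Fin n → ℝ) (w : Fin (m + 1) → Fin d → ℝ),
      ∀ u : Fin d → ℝ,
        u ≠ Istar + L *ᵥ x + M0 *ᵥ w 0 + ∑ i : Fin m, M i *ᵥ w i.succ →
        J x (Istar + L *ᵥ x + M0 *ᵥ w 0 + ∑ i : Fin m, M i *ᵥ w i.succ) w < J x u w :=
  case1_optimal_control_general A B0 B1 S hS svec stil c C0 C1 D E hE dvec evec dtil r Rt R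
end

section
/- With the data and definitions of the preceding Case-1 statement (m ≥ 1; A, B⁰, B¹; S positive semidefinite, s, s̃; c_i, C_i⁰, C_i¹; D symmetric, E positive definite, d, e, d̃; r^i, R̃^i, R^{ij} with (R^{ij})ᵀ = R^{ji} for i,j = 0,…,m-1; the function J; H = E + (B⁰)ᵀSB⁰ + Σ_i(C_i⁰)ᵀSC_i⁰; and I•, L, M⁰, M^i), define: s̃' = d̃ + s̃ + Σ_i c_iᵀS c_i - I•ᵀH I•; s' = d + Aᵀs - LᵀH I•; S' = D + AᵀSA - LᵀHL; r'^0 = (B¹)ᵀs + Σ_i (C_i¹)ᵀS c_i - (M⁰)ᵀH I•; r'^i = r^{i-1} - (M^i)ᵀH I• for i = 1,…,m; R̃'^0 = AᵀS B¹ - LᵀH M⁰; R̃'^i = AᵀR̃^{i-1} - LᵀH M^i for i = 1,…,m; R'^{00} = (B¹)ᵀSB¹ + Σ_i (C_i¹)ᵀS C_i¹ - (M⁰)ᵀH M⁰; R'^{i0} = (R̃^{i-1})ᵀB¹ - (M^i)ᵀH M⁰ and R'^{0i} = (R'^{i0})ᵀ for i = 1,…,m; R'^{ij} = R^{(i-1)(j-1)}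 - (M^i)ᵀH M^j for i,j = 1,…,m. Then for all x ∈ ℝⁿ and w_0,…,w_m ∈ ℝ^d, with u* = I• + Lx + Σ_{i=0}^m M^i w_i, one has J(x, u*, w_0,…,w_m) = s̃' + 2xᵀs' + xᵀS'x + 2Σ_{i=0}^m w_iᵀ r'^i + 2xᵀ Σ_{i=0}^m R̃'^i w_i + Σ_{i,j=0}^m w_iᵀ R'^{ij} w_j. -/
open Matrix

section helpers
set_option linter.unusedSectionVars false
variable {ι k l : Type*} [Fintype k] [Fintype l]

lemma mydot_trans (X : Matrix k l ℝ) (a : l → ℝ) (b : k → ℝ) :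
    a ⬝ᵥ (Xᵀ *ᵥ b) = (X *ᵥ a) ⬝ᵥ b := by
  simp only [dotProduct, mulVec, transpose_apply, Finset.mul_sum, Finset.sum_mul]
  rw [Finset.sum_comm]
  apply Finset.sum_congr rfl; intros; apply Finset.sum_congr rfl; intros; ring

lemma mytrans_dot (X : Matrix k l ℝ) (a : l → ℝ) (b : k → ℝ) :
    (Xᵀ *ᵥ b) ⬝ᵥ a = b ⬝ᵥ (X *ᵥ a) := by
  rw [dotProduct_comm, mydot_trans, dotProduct_comm]

lemma mysum_mulVec (s : Finset ι) (M : ι → Matrix k l ℝ) (v : l → ℝ) :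
    (∑ i ∈ s, M i) *ᵥ v = ∑ i ∈ s, M i *ᵥ v := by
  ext j
  simp only [Finset.sum_apply, mulVec, dotProduct, Matrix.sum_apply, Finset.sum_mul]
  exact Finset.sum_comm

lemma mymulVec_sum (s : Finset ι) (M : Matrix k l ℝ) (v : ι → l → ℝ) :
    M *ᵥ (∑ i ∈ s, v i) = ∑ i ∈ s, M *ᵥ v i := by
  ext j
  simp only [Finset.sum_apply, mulVec, dotProduct, Finset.mul_sum]
  exact Finset.sum_comm

lemma mydot_sum (s : Finset ι) (a : k → ℝ) (v : ι → k → ℝ) :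
    a ⬝ᵥ (∑ i ∈ s, v i) = ∑ i ∈ s, a ⬝ᵥ v i := by
  simp only [dotProduct, Finset.sum_apply, Finset.mul_sum]
  exact Finset.sum_comm

lemma mysum_dot (s : Finset ι) (a : k → ℝ) (v : ι → k → ℝ) :
    (∑ i ∈ s, v i) ⬝ᵥ a = ∑ i ∈ s, v i ⬝ᵥ a := by
  simp only [dotProduct, Finset.sum_apply, Finset.sum_mul]
  exact Finset.sum_comm

end helpers

set_option maxHeartbeats 4000000 in
/-- Coefficient update (18) of Theorem 1 (Case 1 of the inductive step):
substituting the optimal feedback control `u* = I• + Lx + Σ_{i=0}^m M^i w_i` into `J`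
yields the stated quadratic form in `(x, w_0, …, w_m)` with the recursively-updated
coefficients. -/
theorem case1_cost_update {n d p m : ℕ} (hm : 1 ≤ m)
    (A : Matrix (Fin n) (Fin n) ℝ) (B0 B1 : Matrix (Fin n) (Fin d) ℝ)
    (S : Matrix (Fin n) (Fin n) ℝ) (hS : S.PosSemidef)
    (svec : Fin n → ℝ) (stil : ℝ)
    (c : Fin p → Fin n → ℝ) (C0 C1 : Fin p → Matrix (Fin n) (Fin d) ℝ)
    (D : Matrix (Fin n) (Fin n) ℝ) (hD : D.IsSymm)
    (E : Matrix (Fin d) (Fin d) ℝ) (hE : E.PosDef)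
    (dvec : Fin n → ℝ) (evec : Fin d → ℝ) (dtil : ℝ)
    (r : Fin m → Fin d → ℝ) (Rt : Fin m → Matrix (Fin n) (Fin d) ℝ)
    (R : Fin m → Fin m → Matrix (Fin d) (Fin d) ℝ)
    (hR : ∀ i j : Fin m, (R i j)ᵀ = R j i) :
    let J : (Fin n → ℝ) → (Fin d → ℝ) → (Fin (m + 1) → Fin d → ℝ) → ℝ := fun x u w =>
      dtil + 2 * (x ⬝ᵥ dvec) + x ⬝ᵥ (D *ᵥ x) + 2 * (u ⬝ᵥ evec) + u ⬝ᵥ (E *ᵥ u)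
        + stil + 2 * ((A *ᵥ x + B0 *ᵥ u + B1 *ᵥ w 0) ⬝ᵥ svec)
        + (A *ᵥ x + B0 *ᵥ u + B1 *ᵥ w 0) ⬝ᵥ (S *ᵥ (A *ᵥ x + B0 *ᵥ u + B1 *ᵥ w 0))
        + ∑ i : Fin p, (c i + C0 i *ᵥ u + C1 i *ᵥ w 0) ⬝ᵥ
            (S *ᵥ (c i + C0 i *ᵥ u + C1 i *ᵥ w 0))
        + 2 * ∑ i : Fin m, w i.succ ⬝ᵥ r i
        + 2 * ((A *ᵥ x + B0 *ᵥ u + B1 *ᵥ w 0) ⬝ᵥ ∑ i : Fin m, Rt i *ᵥ w i.succ)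
        + ∑ i : Fin m, ∑ j : Fin m, w i.succ ⬝ᵥ (R i j *ᵥ w j.succ)
    let H := E + B0ᵀ * S * B0 + ∑ i : Fin p, (C0 i)ᵀ * S * C0 i
    let Istar : Fin d → ℝ :=
      -(H⁻¹ *ᵥ (evec + B0ᵀ *ᵥ svec + ∑ i : Fin p, (C0 i)ᵀ *ᵥ (S *ᵥ c i)))
    let L := -(H⁻¹ * B0ᵀ * S * A)
    let M0 := -(H⁻¹ * (B0ᵀ * S * B1 + ∑ i : Fin p, (C0 i)ᵀ * S * C1 i))
    -- `M i` is the matrix `M^{i+1} = -H⁻¹(B⁰)ᵀR̃^i` for `i = 0,…,m-1`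
    let M : Fin m → Matrix (Fin d) (Fin d) ℝ := fun i => -(H⁻¹ * (B0ᵀ * Rt i))
    let stil' : ℝ := dtil + stil + (∑ i : Fin p, c i ⬝ᵥ (S *ᵥ c i))
      - Istar ⬝ᵥ (H *ᵥ Istar)
    let svec' : Fin n → ℝ := dvec + Aᵀ *ᵥ svec - Lᵀ *ᵥ (H *ᵥ Istar)
    let S' := D + Aᵀ * S * A - Lᵀ * H * L
    let r'0 : Fin d → ℝ := B1ᵀ *ᵥ svec + (∑ i : Fin p, (C1 i)ᵀ *ᵥ (S *ᵥ c i))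
      - M0ᵀ *ᵥ (H *ᵥ Istar)
    -- `r's i` is `r'^{i+1} = r^i - (M^{i+1})ᵀHI•` for `i = 0,…,m-1`
    let r's : Fin m → Fin d → ℝ := fun i => r i - (M i)ᵀ *ᵥ (H *ᵥ Istar)
    let Rt'0 := Aᵀ * S * B1 - Lᵀ * H * M0
    let Rt's : Fin m → Matrix (Fin n) (Fin d) ℝ := fun i => Aᵀ * Rt i - Lᵀ * H * M i
    let R'00 := B1ᵀ * S * B1 + (∑ i : Fin p, (C1 i)ᵀ * S * C1 i) - M0ᵀ * H * M0
    -- `R's0 i` is `R'^{(i+1)0} = (R̃^i)ᵀB¹ - (M^{i+1})ᵀHM⁰`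
    let R's0 : Fin m → Matrix (Fin d) (Fin d) ℝ := fun i => (Rt i)ᵀ * B1 - (M i)ᵀ * H * M0
    let R'0s : Fin m → Matrix (Fin d) (Fin d) ℝ := fun i => (R's0 i)ᵀ
    let R'ss : Fin m → Fin m → Matrix (Fin d) (Fin d) ℝ := fun i j =>
      R i j - (M i)ᵀ * H * M j
    ∀ (x : Fin n → ℝ) (w : Fin (m + 1) → Fin d → ℝ),
      J x (Istar + L *ᵥ x + M0 *ᵥ w 0 + ∑ i : Fin m, M i *ᵥ w i.succ) w =
        stil' + 2 * (x ⬝ᵥ svec') + x ⬝ᵥ (S' *ᵥ x)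
          + 2 * (w 0 ⬝ᵥ r'0 + ∑ i : Fin m, w i.succ ⬝ᵥ r's i)
          + 2 * (x ⬝ᵥ (Rt'0 *ᵥ w 0 + ∑ i : Fin m, Rt's i *ᵥ w i.succ))
          + (w 0 ⬝ᵥ (R'00 *ᵥ w 0)
            + ∑ j : Fin m, w 0 ⬝ᵥ (R'0s j *ᵥ w j.succ)
            + ∑ i : Fin m, w i.succ ⬝ᵥ (R's0 i *ᵥ w 0)
            + ∑ i : Fin m, ∑ j : Fin m, w i.succ ⬝ᵥ (R'ss i j *ᵥ w j.succ)) := by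
  intro J H Istar L M0 M stil' svec' S' r'0 r's Rt'0 Rt's R'00 R's0 R'0s R'ss
  have hJ : J = fun x u w =>
      dtil + 2 * (x ⬝ᵥ dvec) + x ⬝ᵥ (D *ᵥ x) + 2 * (u ⬝ᵥ evec) + u ⬝ᵥ (E *ᵥ u)
        + stil + 2 * ((A *ᵥ x + B0 *ᵥ u + B1 *ᵥ w 0) ⬝ᵥ svec)
        + (A *ᵥ x + B0 *ᵥ u + B1 *ᵥ w 0) ⬝ᵥ (S *ᵥ (A *ᵥ x + B0 *ᵥ u + B1 *ᵥ w 0))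
        + ∑ i : Fin p, (c i + C0 i *ᵥ u + C1 i *ᵥ w 0) ⬝ᵥ
            (S *ᵥ (c i + C0 i *ᵥ u + C1 i *ᵥ w 0))
        + 2 * ∑ i : Fin m, w i.succ ⬝ᵥ r i
        + 2 * ((A *ᵥ x + B0 *ᵥ u + B1 *ᵥ w 0) ⬝ᵥ ∑ i : Fin m, Rt i *ᵥ w i.succ)
        + ∑ i : Fin m, ∑ j : Fin m, w i.succ ⬝ᵥ (R i j *ᵥ w j.succ) := rfl
  have hH : H = E + B0ᵀ * S * B0 + ∑ i : Fin p, (C0 i)ᵀ * S * C0 i := rfl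
  have hIstar : Istar
      = -(H⁻¹ *ᵥ (evec + B0ᵀ *ᵥ svec + ∑ i : Fin p, (C0 i)ᵀ *ᵥ (S *ᵥ c i))) := rfl
  have hL : L = -(H⁻¹ * B0ᵀ * S * A) := rfl
  have hM0 : M0 = -(H⁻¹ * (B0ᵀ * S * B1 + ∑ i : Fin p, (C0 i)ᵀ * S * C1 i)) := rfl
  have hM : M = fun i => -(H⁻¹ * (B0ᵀ * Rt i)) := rfl
  have hstil' : stil' = dtil + stil + (∑ i : Fin p, c i ⬝ᵥ (S *ᵥ c i))
      - Istar ⬝ᵥ (H *ᵥ Istar) := rfl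
  have hsvec' : svec' = dvec + Aᵀ *ᵥ svec - Lᵀ *ᵥ (H *ᵥ Istar) := rfl
  have hS' : S' = D + Aᵀ * S * A - Lᵀ * H * L := rfl
  have hr'0 : r'0 = B1ᵀ *ᵥ svec + (∑ i : Fin p, (C1 i)ᵀ *ᵥ (S *ᵥ c i))
      - M0ᵀ *ᵥ (H *ᵥ Istar) := rfl
  have hr's : r's = fun i => r i - (M i)ᵀ *ᵥ (H *ᵥ Istar) := rfl
  have hRt'0 : Rt'0 = Aᵀ * S * B1 - Lᵀ * H * M0 := rfl
  have hRt's : Rt's = fun i => Aᵀ * Rt i - Lᵀ * H * M i := rfl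
  have hR'00 : R'00 = B1ᵀ * S * B1 + (∑ i : Fin p, (C1 i)ᵀ * S * C1 i)
      - M0ᵀ * H * M0 := rfl
  have hR's0 : R's0 = fun i => (Rt i)ᵀ * B1 - (M i)ᵀ * H * M0 := rfl
  have hR'0s : R'0s = fun i => (R's0 i)ᵀ := rfl
  have hR'ss : R'ss = fun i j => R i j - (M i)ᵀ * H * M j := rfl
  have hSsym : Sᵀ = S := by
    rw [← Matrix.conjTranspose_eq_transpose_of_trivial]; exact hS.1
  have hEsym : Eᵀ = E := by
    rw [← Matrix.conjTranspose_eq_transpose_of_trivial]; exact hE.1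
  have hPSD1 : (B0ᵀ * S * B0).PosSemidef := by
    have h := hS.conjTranspose_mul_mul_same B0
    rwa [Matrix.conjTranspose_eq_transpose_of_trivial] at h
  have hPSD2 : (∑ i : Fin p, (C0 i)ᵀ * S * C0 i).PosSemidef := by
    classical
    refine Finset.sum_induction _ _ (fun a b ha hb => ha.add hb) Matrix.PosSemidef.zero ?_
    intro i _
    have h := hS.conjTranspose_mul_mul_same (C0 i)
    rwa [Matrix.conjTranspose_eq_transpose_of_trivial] at h
  have hHpd : H.PosDef := (hE.add_posSemidef hPSD1).add_posSemidef hPSD2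
  have hHdet : IsUnit H.det := (Matrix.isUnit_iff_isUnit_det H).mp hHpd.isUnit
  have hHinv : ∀ z : Fin d → ℝ, H *ᵥ (H⁻¹ *ᵥ z) = z := fun z => by
    rw [Matrix.mulVec_mulVec, Matrix.mul_nonsing_inv _ hHdet, Matrix.one_mulVec]
  have hHsym : Hᵀ = H := by
    show (E + B0ᵀ * S * B0 + ∑ i : Fin p, (C0 i)ᵀ * S * C0 i)ᵀ
        = E + B0ᵀ * S * B0 + ∑ i : Fin p, (C0 i)ᵀ * S * C0 i
    simp [Matrix.transpose_add, Matrix.transpose_mul, Matrix.transpose_sum,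
      Matrix.transpose_transpose, hSsym, hEsym, Matrix.mul_assoc]
  clear_value J H Istar L M0 M stil' svec' S' r'0 r's Rt'0 Rt's R'00 R's0 R'0s R'ss
  have hs : ∀ (a b : Fin n → ℝ), a ⬝ᵥ (S *ᵥ b) = b ⬝ᵥ (S *ᵥ a) := by
    intro a b
    conv_lhs => rw [← hSsym]
    rw [mydot_trans, dotProduct_comm]
  have he : ∀ (a b : Fin d → ℝ), a ⬝ᵥ (E *ᵥ b) = b ⬝ᵥ (E *ᵥ a) := by
    intro a b
    conv_lhs => rw [← hEsym]
    rw [mydot_trans, dotProduct_comm]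
  intro x w
  obtain ⟨g, hg⟩ : ∃ gg : Fin d → ℝ, gg =
      (evec + B0ᵀ *ᵥ svec + ∑ i : Fin p, (C0 i)ᵀ *ᵥ (S *ᵥ c i))
        + (B0ᵀ *ᵥ (S *ᵥ (A *ᵥ x)) + B0ᵀ *ᵥ (S *ᵥ (B1 *ᵥ w 0))
          + (∑ i : Fin p, (C0 i)ᵀ *ᵥ (S *ᵥ (C1 i *ᵥ w 0)))
          + ∑ i : Fin m, B0ᵀ *ᵥ (Rt i *ᵥ w i.succ)) := ⟨_, rfl⟩
  have hswap : ∀ f : Fin p → Fin m → ℝ,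
      ∑ i : Fin p, ∑ j : Fin m, f i j = ∑ j : Fin m, ∑ i : Fin p, f i j :=
    fun f => Finset.sum_comm
  obtain ⟨u, hu⟩ : ∃ uu : Fin d → ℝ,
      uu = Istar + L *ᵥ x + M0 *ᵥ w 0 + ∑ i : Fin m, M i *ᵥ w i.succ := ⟨_, rfl⟩
  rw [← hu]
  obtain ⟨Φ, hΦ⟩ : ∃ f : (Fin d → ℝ) → (Fin d → ℝ) → ℝ, f = fun a b =>
      a ⬝ᵥ (E *ᵥ b) + (B0 *ᵥ a) ⬝ᵥ (S *ᵥ (B0 *ᵥ b))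
        + ∑ k : Fin p, (C0 k *ᵥ a) ⬝ᵥ (S *ᵥ (C0 k *ᵥ b)) := ⟨_, rfl⟩
  obtain ⟨T, hT⟩ : ∃ t : ℝ, t =
      Φ Istar Istar + 2 * Φ (L *ᵥ x) Istar + Φ (L *ᵥ x) (L *ᵥ x)
      + 2 * Φ (M0 *ᵥ w 0) Istar + 2 * ∑ i : Fin m, Φ (M i *ᵥ w i.succ) Istar
      + 2 * Φ (L *ᵥ x) (M0 *ᵥ w 0) + 2 * ∑ i : Fin m, Φ (L *ᵥ x) (M i *ᵥ w i.succ)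
      + Φ (M0 *ᵥ w 0) (M0 *ᵥ w 0) + ∑ j : Fin m, Φ (M0 *ᵥ w 0) (M j *ᵥ w j.succ)
      + ∑ i : Fin m, Φ (M i *ᵥ w i.succ) (M0 *ᵥ w 0)
      + ∑ i : Fin m, ∑ j : Fin m, Φ (M i *ᵥ w i.succ) (M j *ᵥ w j.succ) := ⟨_, rfl⟩
  have h3 : H *ᵥ u = -g := by
    rw [hu, hg]
    simp only [hIstar, hL, hM0, hM, Matrix.mulVec_add, Matrix.mulVec_neg, Matrix.neg_mulVec,
      ← Matrix.mulVec_mulVec, mymulVec_sum, mysum_mulVec, Matrix.add_mulVec, hHinv,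
      Finset.sum_neg_distrib]
    abel
  have h4 : u ⬝ᵥ (H *ᵥ u) = T := by
    rw [hu, hT]
    simp only [hΦ, hH]
    simp only [Matrix.add_mulVec, Matrix.mulVec_add, ← Matrix.mulVec_mulVec,
      mysum_mulVec, mymulVec_sum, dotProduct_add, add_dotProduct,
      mydot_sum, mysum_dot, mydot_trans, mytrans_dot, Finset.sum_add_distrib]
    simp only [hs, he]
    simp only [dotProduct_comm, hswap]
    ring
  have hC : J x u w =
      (stil' + 2 * (x ⬝ᵥ svec') + x ⬝ᵥ (S' *ᵥ x)
          + 2 * (w 0 ⬝ᵥ r'0 + ∑ i : Fin m, w i.succ ⬝ᵥ r's i)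
          + 2 * (x ⬝ᵥ (Rt'0 *ᵥ w 0 + ∑ i : Fin m, Rt's i *ᵥ w i.succ))
          + (w 0 ⬝ᵥ (R'00 *ᵥ w 0)
            + ∑ j : Fin m, w 0 ⬝ᵥ (R'0s j *ᵥ w j.succ)
            + ∑ i : Fin m, w i.succ ⬝ᵥ (R's0 i *ᵥ w 0)
            + ∑ i : Fin m, ∑ j : Fin m, w i.succ ⬝ᵥ (R'ss i j *ᵥ w j.succ)))
        + 2 * (u ⬝ᵥ g) + u ⬝ᵥ (H *ᵥ u) + T := by
    rw [hg, hT]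
    simp only [hΦ, hJ, hstil', hsvec', hS', hr'0, hr's, hRt'0, hRt's, hR'00, hR's0, hR'0s, hR'ss, hH]
    simp only [Matrix.transpose_sub, Matrix.transpose_add, Matrix.transpose_mul,
      Matrix.transpose_sum, Matrix.transpose_transpose, hSsym, hEsym]
    simp only [Matrix.add_mulVec, Matrix.sub_mulVec, Matrix.neg_mulVec,
      Matrix.mulVec_add, Matrix.mulVec_sub, Matrix.mulVec_neg,
      ← Matrix.mulVec_mulVec, mysum_mulVec, mymulVec_sum]
    simp only [dotProduct_add, add_dotProduct, dotProduct_sub, sub_dotProduct,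
      dotProduct_neg, neg_dotProduct, mydot_sum, mysum_dot,
      Finset.sum_add_distrib, Finset.sum_sub_distrib, Finset.sum_neg_distrib]
    simp only [mydot_trans, mytrans_dot]
    simp only [hs, he]
    simp only [dotProduct_comm, hswap]
    ring
  have hug : u ⬝ᵥ g = -T := by
    have h5 : u ⬝ᵥ (H *ᵥ u) = -(u ⬝ᵥ g) := by rw [h3, dotProduct_neg]
    rw [h4] at h5; linarith
  rw [hC, h4, hug]
  ring
end

section
/- With the data and definitions of the preceding Case-2 statement (l ≥ 1; A, B⁰, B¹; S symmetric, s, s̃; c_i, C_i⁰, C_i¹; D symmetric, E symmetric; d, e, d̃; r^i, R̃^i, R^{ij} with (R^{ij})ᵀ = R^{ji} for i,j = 0,…,l-1; the function J; H = E + (B⁰)ᵀSB⁰ + Σ_i(C_i⁰)ᵀSC_i⁰ + R^{(l-1)(l-1)} + (B⁰)ᵀR̃^{l-1} + (R̃^{l-1})ᵀB⁰ assumed positive definite; and I•, L, M⁰, M^i as defined there), define: s̃' = d̃ + s̃ + Σ_i c_iᵀS c_i - I•ᵀH I•; s' = d + Aᵀs - LᵀH I•; S' = D + AᵀSA - LᵀHL;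 r'^0 = (B¹)ᵀs + Σ_i (C_i¹)ᵀS c_i - (M⁰)ᵀH I•; r'^i = r^{i-1} - (M^i)ᵀH I• for i = 1,…,l-1; R̃'^0 = AᵀS B¹ - LᵀH M⁰; R̃'^i = AᵀR̃^{i-1} - LᵀH M^i for i = 1,…,l-1; R'^{00} = (B¹)ᵀSB¹ + Σ_i (C_i¹)ᵀS C_i¹ - (M⁰)ᵀH M⁰; R'^{i0} = (R̃^{i-1})ᵀB¹ - (M^i)ᵀH M⁰ and R'^{0i} = (R'^{i0})ᵀ for i = 1,…,l-1; R'^{ij} = R^{(i-1)(j-1)} - (M^i)ᵀH M^j for i,j = 1,…,l-1. Then for all x ∈ ℝⁿ and w_0,…,w_{l-1} ∈ ℝ^d, with u* = I• + Lx + Σ_{i=0}^{l-1} M^i w_i, one has J(x, u*, w_0,…,w_{l-1}) = s̃' + 2xᵀs' + xᵀS'x + 2Σ_{i=0}^{l-1} w_iᵀ r'^i + 2xᵀ Σ_{i=0}^{l-1} R̃'^i w_i + Σ_{i,j=0}^{l-1} w_iᵀ R'^{ij} w_j. -/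
/-!
Collecting the terms of `J` that contain `u` (the last delay slot, the `B⁰u` part of `x⁺` and
the `C⁰ᵢu` parts of the noise terms) gives `J(x, u, w) = J(x, 0, w) + uᵀHu + 2uᵀg` with
`g = a + Kx + Σᵢ Nⁱwᵢ` affine in `(x, w)`; symmetry of `S` and of the family `R` merges the cross
terms. The gains are `I• = -H⁻¹a`, `L = -H⁻¹K`, `Mⁱ = -H⁻¹Nⁱ`, so `Hu* = -g` and
`J(x, u*, w) = J(x, 0, w) - u*ᵀHu*`. Both terms are quadratic forms in `(x, w)`: `J(x, 0, w)` has
the updated coefficients without their `-(·)ᵀH(·)` parts, and since `H` is symmetric `u*ᵀHu*` is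
the form whose coefficients are exactly those parts.
-/

open Matrix

theorem Matrix.IsSymm.dotProduct_mulVec_comm_s12 {n α : Type*} [Fintype n] [CommSemiring α]
    {A : Matrix n n α} (hA : A.IsSymm) (a b : n → α) :
    a ⬝ᵥ (A *ᵥ b) = b ⬝ᵥ (A *ᵥ a) := by
  rw [← dotProduct_transpose_mulVec, hA.eq]

theorem Fin.snoc_tail_eq_dite {α : Type*} {m : ℕ} (w : Fin (m + 1) → α) (u : α) :
    (Fin.snoc (Fin.tail w) u : Fin (m + 1) → α) =
      fun i : Fin (m + 1) => if h : (i : ℕ) + 1 < m + 1 then w ⟨i + 1, h⟩ else u := by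
  funext i
  induction i using Fin.lastCases with
  | last => simp
  | cast i => simp [Fin.tail, Fin.succ]

theorem Matrix.mulVec_nonsing_inv_affine {n k l ι α : Type*} [Fintype n] [Fintype k]
    [DecidableEq k] [Fintype l] [Fintype ι] [CommRing α] {H : Matrix k k α}
    (hH : IsUnit H.det) (a : k → α) (K : Matrix k n α) (N : ι → Matrix k l α) (x : n → α)
    (w : ι → l → α) :
    H *ᵥ (-(H⁻¹ *ᵥ a) + -(H⁻¹ * K) *ᵥ x + ∑ i, -(H⁻¹ * N i) *ᵥ w i) =
      -(a + K *ᵥ x + ∑ i, N i *ᵥ w i) := by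
  simp only [mulVec_add, mulVec_neg, neg_mulVec, mulVec_sum, mulVec_mulVec, ← Matrix.mul_assoc,
    mul_nonsing_inv _ hH, Matrix.one_mul, one_mulVec, Finset.sum_neg_distrib, neg_add]

/-- Coefficients `(s̃, s, S, rⁱ, R̃ⁱ, Rⁱʲ)` of the cost-to-go
`s̃ + 2xᵀs + xᵀSx + 2Σ wᵢᵀrⁱ + 2xᵀΣ R̃ⁱwᵢ + Σ wᵢᵀRⁱʲwⱼ`. -/
@[ext]
structure CostCoeffs (α n d ι : Type*) where
  const : α
  lin : n → α
  quad : Matrix n n α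
  delayLin : ι → d → α
  cross : ι → Matrix n d α
  delayQuad : ι → ι → Matrix d d α

namespace CostCoeffs

variable {α n d ι : Type*}

instance [Sub α] : Sub (CostCoeffs α n d ι) :=
  ⟨fun q q' => ⟨q.const - q'.const, q.lin - q'.lin, q.quad - q'.quad, q.delayLin - q'.delayLin,
    q.cross - q'.cross, q.delayQuad - q'.delayQuad⟩⟩

theorem sub_def [Sub α] (q q' : CostCoeffs α n d ι) :
    q - q' = ⟨q.const - q'.const, q.lin - q'.lin, q.quad - q'.quad, q.delayLin - q'.delayLin,
      q.cross - q'.cross, q.delayQuad - q'.delayQuad⟩ :=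
  rfl

def gain [CommRing α] {k : Type*} [Fintype k] (H : Matrix k k α) (I : k → α)
    (L : Matrix k n α) (M : ι → Matrix k d α) : CostCoeffs α n d ι :=
  ⟨I ⬝ᵥ (H *ᵥ I), Lᵀ *ᵥ (H *ᵥ I), Lᵀ * H * L, fun i => (M i)ᵀ *ᵥ (H *ᵥ I),
    fun i => Lᵀ * H * M i, fun i j => (M i)ᵀ * H * M j⟩

variable [CommRing α] [Fintype n] [Fintype d] [Fintype ι]

def eval (q : CostCoeffs α n d ι) (x : n → α) (w : ι → d → α) : α :=
  q.const + 2 * (x ⬝ᵥ q.lin) + x ⬝ᵥ (q.quad *ᵥ x) + 2 * ∑ i, w i ⬝ᵥ q.delayLin i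
    + 2 * (x ⬝ᵥ ∑ i, q.cross i *ᵥ w i) + ∑ i, ∑ j, w i ⬝ᵥ (q.delayQuad i j *ᵥ w j)

theorem eval_sub (q q' : CostCoeffs α n d ι) (x : n → α) (w : ι → d → α) :
    (q - q').eval x w = q.eval x w - q'.eval x w := by
  simp only [eval, sub_def, Pi.sub_apply, dotProduct_sub, sub_mulVec, Finset.sum_sub_distrib]
  ring

theorem eval_gain {k : Type*} [Fintype k] {H : Matrix k k α} (hH : H.IsSymm) (I : k → α)
    (L : Matrix k n α) (M : ι → Matrix k d α) (x : n → α) (w : ι → d → α) :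
    (gain H I L M).eval x w =
      (I + L *ᵥ x + ∑ i, M i *ᵥ w i) ⬝ᵥ (H *ᵥ (I + L *ᵥ x + ∑ i, M i *ᵥ w i)) := by
  simp only [eval, gain, mulVec_add, add_dotProduct, dotProduct_add, ← mulVec_mulVec,
    dotProduct_transpose_mulVec, mulVec_sum, sum_dotProduct, dotProduct_sum,
    Finset.sum_add_distrib]
  simp only [hH.dotProduct_mulVec_comm_s12, dotProduct_comm]
  ring

end CostCoeffs

/-- The data of the statement, with `l = m + 1` delay slots. -/
structure LQStage (α : Type*) (n d p m : ℕ) where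
  A : Matrix (Fin n) (Fin n) α
  B0 : Matrix (Fin n) (Fin d) α
  B1 : Matrix (Fin n) (Fin d) α
  S : Matrix (Fin n) (Fin n) α
  svec : Fin n → α
  stil : α
  c : Fin p → Fin n → α
  C0 : Fin p → Matrix (Fin n) (Fin d) α
  C1 : Fin p → Matrix (Fin n) (Fin d) α
  D : Matrix (Fin n) (Fin n) α
  E : Matrix (Fin d) (Fin d) α
  dvec : Fin n → α
  evec : Fin d → α
  dtil : α
  r : Fin (m + 1) → Fin d → α
  Rt : Fin (m + 1) → Matrix (Fin n) (Fin d) α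
  R : Fin (m + 1) → Fin (m + 1) → Matrix (Fin d) (Fin d) α

namespace LQStage

variable {α : Type*} [CommRing α] {n d p m : ℕ} (P : LQStage α n d p m)

def next (x : Fin n → α) (u : Fin d → α) (w : Fin (m + 1) → Fin d → α) : Fin n → α :=
  P.A *ᵥ x + P.B0 *ᵥ u + P.B1 *ᵥ w 0

-- `Fin.snoc (Fin.tail w) u` is the shifted vector `v`: `vᵢ = wᵢ₊₁` for `i < m`, `vₘ = u`.
def cost (x : Fin n → α) (u : Fin d → α) (w : Fin (m + 1) → Fin d → α) : α :=
  let v : Fin (m + 1) → Fin d → α := Fin.snoc (Fin.tail w) u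
  P.dtil + 2 * (x ⬝ᵥ P.dvec) + x ⬝ᵥ (P.D *ᵥ x) + 2 * (u ⬝ᵥ P.evec) + u ⬝ᵥ (P.E *ᵥ u)
    + P.stil + 2 * (P.next x u w ⬝ᵥ P.svec) + P.next x u w ⬝ᵥ (P.S *ᵥ P.next x u w)
    + ∑ i, (P.c i + P.C0 i *ᵥ u + P.C1 i *ᵥ w 0) ⬝ᵥ
        (P.S *ᵥ (P.c i + P.C0 i *ᵥ u + P.C1 i *ᵥ w 0))
    + 2 * ∑ i, v i ⬝ᵥ P.r i
    + 2 * (P.next x u w ⬝ᵥ ∑ i, P.Rt i *ᵥ v i)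
    + ∑ i, ∑ j, v i ⬝ᵥ (P.R i j *ᵥ v j)

def hessian : Matrix (Fin d) (Fin d) α :=
  P.E + P.B0ᵀ * P.S * P.B0 + (∑ i, (P.C0 i)ᵀ * P.S * P.C0 i)
    + P.R (Fin.last m) (Fin.last m) + P.B0ᵀ * P.Rt (Fin.last m) + (P.Rt (Fin.last m))ᵀ * P.B0

def gradConst : Fin d → α :=
  P.evec + P.B0ᵀ *ᵥ P.svec + (∑ i, (P.C0 i)ᵀ *ᵥ (P.S *ᵥ P.c i)) + P.r (Fin.last m)

def gradState : Matrix (Fin d) (Fin n) α :=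
  (P.S * P.B0 + P.Rt (Fin.last m))ᵀ * P.A

def gradDelay : Fin (m + 1) → Matrix (Fin d) (Fin d) α :=
  Fin.cons (P.B0ᵀ * P.S * P.B1 + (∑ i, (P.C0 i)ᵀ * P.S * P.C1 i) + (P.Rt (Fin.last m))ᵀ * P.B1)
    fun i => P.B0ᵀ * P.Rt i.castSucc + P.R (Fin.last m) i.castSucc

def baseCoeffs : CostCoeffs α (Fin n) (Fin d) (Fin (m + 1)) where
  const := P.dtil + P.stil + ∑ i, P.c i ⬝ᵥ (P.S *ᵥ P.c i)
  lin := P.dvec + P.Aᵀ *ᵥ P.svec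
  quad := P.D + P.Aᵀ * P.S * P.A
  delayLin := Fin.cons (P.B1ᵀ *ᵥ P.svec + ∑ k, (P.C1 k)ᵀ *ᵥ (P.S *ᵥ P.c k))
    fun i => P.r i.castSucc
  cross := Fin.cons (P.Aᵀ * P.S * P.B1) fun i => P.Aᵀ * P.Rt i.castSucc
  delayQuad := Fin.cons
    (Fin.cons (P.B1ᵀ * P.S * P.B1 + ∑ k, (P.C1 k)ᵀ * P.S * P.C1 k)
      fun j => P.B1ᵀ * P.Rt j.castSucc)
    fun i => Fin.cons ((P.Rt i.castSucc)ᵀ * P.B1) fun j => P.R i.castSucc j.castSucc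

variable {P}

theorem isSymm_hessian (hS : P.S.IsSymm) (hE : P.E.IsSymm)
    (hR : ∀ i j, (P.R i j)ᵀ = P.R j i) : P.hessian.IsSymm := by
  simp only [IsSymm, hessian, transpose_add, transpose_mul, transpose_transpose, transpose_sum,
    hS.eq, hE.eq, hR, ← Matrix.mul_assoc]
  abel

theorem cost_eq_cost_zero_add (hS : P.S.IsSymm) (hR : ∀ i j, (P.R i j)ᵀ = P.R j i)
    (x : Fin n → α) (u : Fin d → α) (w : Fin (m + 1) → Fin d → α) :
    P.cost x u w = P.cost x 0 w + u ⬝ᵥ (P.hessian *ᵥ u)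
      + 2 * (u ⬝ᵥ (P.gradConst + P.gradState *ᵥ x + ∑ i, P.gradDelay i *ᵥ w i)) := by
  have hRcomm (i j) (a b : Fin d → α) : a ⬝ᵥ (P.R i j *ᵥ b) = b ⬝ᵥ (P.R j i *ᵥ a) := by
    rw [← dotProduct_transpose_mulVec, hR]
  -- Once every matrix acts on its vector, ordered rewriting with the symmetry lemmas puts each
  -- bilinear term in one orientation, so that `ring` can match the two sides.
  rw [Fin.sum_univ_succ (f := fun i => P.gradDelay i *ᵥ w i)]
  simp only [cost, next, hessian, gradConst, gradState, gradDelay, Fin.cons_zero, Fin.cons_succ,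
    Fin.sum_univ_castSucc (n := m), Fin.snoc_castSucc, Fin.snoc_last, Fin.tail]
  simp only [mulVec_add, add_mulVec, dotProduct_add, add_dotProduct, mulVec_zero,
    dotProduct_zero, zero_dotProduct, ← mulVec_mulVec, dotProduct_sum, sum_mulVec,
    Finset.sum_add_distrib, Finset.sum_const_zero, mul_add, dotProduct_transpose_mulVec,
    transpose_add, transpose_mul, hS.eq, add_zero]
  simp only [hS.dotProduct_mulVec_comm_s12, hRcomm, dotProduct_comm]
  ring

theorem cost_zero_eq_eval_baseCoeffs (hS : P.S.IsSymm) (x : Fin n → α)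
    (w : Fin (m + 1) → Fin d → α) :
    P.cost x 0 w = P.baseCoeffs.eval x w := by
  simp only [CostCoeffs.eval, baseCoeffs, Fin.sum_univ_succ (n := m), Fin.cons_zero,
    Fin.cons_succ]
  simp only [cost, next, Fin.sum_univ_castSucc (n := m), Fin.snoc_castSucc, Fin.snoc_last,
    Fin.tail]
  simp only [mulVec_add, add_mulVec, dotProduct_add, add_dotProduct, mulVec_zero,
    dotProduct_zero, zero_dotProduct, ← mulVec_mulVec, dotProduct_sum, sum_mulVec,
    Finset.sum_add_distrib, Finset.sum_const_zero, mul_add, dotProduct_transpose_mulVec, add_zero]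
  simp only [hS.dotProduct_mulVec_comm_s12, dotProduct_comm]
  ring

end LQStage

/-- Coefficient update (8)/(20) of Theorem 1 (Case 2 of the inductive
step): substituting the optimal feedback control `u* = I• + Lx + Σ_{i=0}^{l-1} M^i w_i`
into `J` yields the stated quadratic form in `(x, w_0, …, w_{l-1})` with the
recursively-updated coefficients. -/
theorem case2_cost_update {n d p l : ℕ} (hl : 1 ≤ l)
    (A : Matrix (Fin n) (Fin n) ℝ) (B0 B1 : Matrix (Fin n) (Fin d) ℝ)
    (S : Matrix (Fin n) (Fin n) ℝ) (hS : S.IsSymm)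
    (svec : Fin n → ℝ) (stil : ℝ)
    (c : Fin p → Fin n → ℝ) (C0 C1 : Fin p → Matrix (Fin n) (Fin d) ℝ)
    (D : Matrix (Fin n) (Fin n) ℝ)
    (E : Matrix (Fin d) (Fin d) ℝ) (hE : E.IsSymm)
    (dvec : Fin n → ℝ) (evec : Fin d → ℝ) (dtil : ℝ)
    (r : Fin l → Fin d → ℝ) (Rt : Fin l → Matrix (Fin n) (Fin d) ℝ)
    (R : Fin l → Fin l → Matrix (Fin d) (Fin d) ℝ)
    (hR : ∀ i j : Fin l, (R i j)ᵀ = R j i) :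
    let last : Fin l := ⟨l - 1, by omega⟩
    let fz : Fin l := ⟨0, by omega⟩
    -- `v u w i = w_{i+1}` for `i = 0,…,l-2` and `v u w (l-1) = u`
    let v : (Fin d → ℝ) → (Fin l → Fin d → ℝ) → Fin l → Fin d → ℝ := fun u w i =>
      if h : (i : ℕ) + 1 < l then w ⟨(i : ℕ) + 1, h⟩ else u
    let J : (Fin n → ℝ) → (Fin d → ℝ) → (Fin l → Fin d → ℝ) → ℝ := fun x u w =>
      dtil + 2 * (x ⬝ᵥ dvec) + x ⬝ᵥ (D *ᵥ x) + 2 * (u ⬝ᵥ evec) + u ⬝ᵥ (E *ᵥ u)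
        + stil + 2 * ((A *ᵥ x + B0 *ᵥ u + B1 *ᵥ w fz) ⬝ᵥ svec)
        + (A *ᵥ x + B0 *ᵥ u + B1 *ᵥ w fz) ⬝ᵥ (S *ᵥ (A *ᵥ x + B0 *ᵥ u + B1 *ᵥ w fz))
        + ∑ i : Fin p, (c i + C0 i *ᵥ u + C1 i *ᵥ w fz) ⬝ᵥ
            (S *ᵥ (c i + C0 i *ᵥ u + C1 i *ᵥ w fz))
        + 2 * ∑ i : Fin l, v u w i ⬝ᵥ r i
        + 2 * ((A *ᵥ x + B0 *ᵥ u + B1 *ᵥ w fz) ⬝ᵥ ∑ i : Fin l, Rt i *ᵥ v u w i)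
        + ∑ i : Fin l, ∑ j : Fin l, v u w i ⬝ᵥ (R i j *ᵥ v u w j)
    let H := E + B0ᵀ * S * B0 + (∑ i : Fin p, (C0 i)ᵀ * S * C0 i)
      + R last last + B0ᵀ * Rt last + (Rt last)ᵀ * B0
    let Istar : Fin d → ℝ :=
      -(H⁻¹ *ᵥ (evec + B0ᵀ *ᵥ svec + (∑ i : Fin p, (C0 i)ᵀ *ᵥ (S *ᵥ c i)) + r last))
    let L := -(H⁻¹ * (S * B0 + Rt last)ᵀ * A)
    let M0 := -(H⁻¹ * (B0ᵀ * S * B1 + (∑ i : Fin p, (C0 i)ᵀ * S * C1 i)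
      + (Rt last)ᵀ * B1))
    -- `M i = M⁰` for `i = 0` and `M^i = -H⁻¹((B⁰)ᵀR̃^{i-1} + R^{(l-1)(i-1)})` for `i ≥ 1`
    let M : Fin l → Matrix (Fin d) (Fin d) ℝ := fun i =>
      if _h : (i : ℕ) = 0 then M0
      else -(H⁻¹ * (B0ᵀ * Rt ⟨(i : ℕ) - 1, Nat.lt_of_le_of_lt (Nat.sub_le _ _) i.isLt⟩
        + R last ⟨(i : ℕ) - 1, Nat.lt_of_le_of_lt (Nat.sub_le _ _) i.isLt⟩))
    let stil' : ℝ := dtil + stil + (∑ i : Fin p, c i ⬝ᵥ (S *ᵥ c i))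
      - Istar ⬝ᵥ (H *ᵥ Istar)
    let svec' : Fin n → ℝ := dvec + Aᵀ *ᵥ svec - Lᵀ *ᵥ (H *ᵥ Istar)
    let S' := D + Aᵀ * S * A - Lᵀ * H * L
    -- `r' 0 = (B¹)ᵀs + Σ_i (C_i¹)ᵀSc_i - (M⁰)ᵀHI•` and `r'^i = r^{i-1} - (M^i)ᵀHI•` for `i ≥ 1`
    let r' : Fin l → Fin d → ℝ := fun i =>
      if _h : (i : ℕ) = 0 then
        B1ᵀ *ᵥ svec + (∑ k : Fin p, (C1 k)ᵀ *ᵥ (S *ᵥ c k)) - M0ᵀ *ᵥ (H *ᵥ Istar)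
      else r ⟨(i : ℕ) - 1, Nat.lt_of_le_of_lt (Nat.sub_le _ _) i.isLt⟩
        - (M i)ᵀ *ᵥ (H *ᵥ Istar)
    -- `R̃'^0 = AᵀSB¹ - LᵀHM⁰` and `R̃'^i = AᵀR̃^{i-1} - LᵀHM^i` for `i ≥ 1`
    let Rt' : Fin l → Matrix (Fin n) (Fin d) ℝ := fun i =>
      if _h : (i : ℕ) = 0 then Aᵀ * S * B1 - Lᵀ * H * M0
      else Aᵀ * Rt ⟨(i : ℕ) - 1, Nat.lt_of_le_of_lt (Nat.sub_le _ _) i.isLt⟩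
        - Lᵀ * H * M i
    -- `R'^{00}`, `R'^{i0}`, `R'^{0i} = (R'^{i0})ᵀ`, and `R'^{ij}` for `i, j ≥ 1`
    let R' : Fin l → Fin l → Matrix (Fin d) (Fin d) ℝ := fun i j =>
      if _hi : (i : ℕ) = 0 then
        if _hj : (j : ℕ) = 0 then
          B1ᵀ * S * B1 + (∑ k : Fin p, (C1 k)ᵀ * S * C1 k) - M0ᵀ * H * M0
        else ((Rt ⟨(j : ℕ) - 1, Nat.lt_of_le_of_lt (Nat.sub_le _ _) j.isLt⟩)ᵀ * B1
          - (M j)ᵀ * H * M0)ᵀ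
      else
        if _hj : (j : ℕ) = 0 then
          (Rt ⟨(i : ℕ) - 1, Nat.lt_of_le_of_lt (Nat.sub_le _ _) i.isLt⟩)ᵀ * B1
            - (M i)ᵀ * H * M0
        else R ⟨(i : ℕ) - 1, Nat.lt_of_le_of_lt (Nat.sub_le _ _) i.isLt⟩
            ⟨(j : ℕ) - 1, Nat.lt_of_le_of_lt (Nat.sub_le _ _) j.isLt⟩
          - (M i)ᵀ * H * M j
    H.PosDef →
      ∀ (x : Fin n → ℝ) (w : Fin l → Fin d → ℝ),
        J x (Istar + L *ᵥ x + ∑ i : Fin l, M i *ᵥ w i) w =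
          stil' + 2 * (x ⬝ᵥ svec') + x ⬝ᵥ (S' *ᵥ x)
            + 2 * ∑ i : Fin l, w i ⬝ᵥ r' i
            + 2 * (x ⬝ᵥ ∑ i : Fin l, Rt' i *ᵥ w i)
            + ∑ i : Fin l, ∑ j : Fin l, w i ⬝ᵥ (R' i j *ᵥ w j) := by
  obtain ⟨m, rfl⟩ : ∃ m, l = m + 1 := ⟨l - 1, by omega⟩
  intro last fz v J H Istar L M0 M stil' svec' S' r' Rt' R' hH x w
  let P : LQStage ℝ n d p m :=
    ⟨A, B0, B1, S, svec, stil, c, C0, C1, D, E, dvec, evec, dtil, r, Rt, R⟩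
  have hHsymm : H.IsSymm := LQStage.isSymm_hessian (P := P) hS hE hR
  have hdet : IsUnit H.det := (isUnit_iff_isUnit_det H).mp hH.isUnit
  have hJ (u) : J x u w = P.cost x u w := by
    simp only [LQStage.cost, Fin.snoc_tail_eq_dite]
    rfl
  have hM : M = fun i => -(H⁻¹ * P.gradDelay i) := by
    funext i
    cases i using Fin.cases <;> rfl
  have hcoeffs :
      (⟨stil', svec', S', r', Rt', R'⟩ : CostCoeffs ℝ (Fin n) (Fin d) (Fin (m + 1))) =
        P.baseCoeffs - .gain H Istar L M := by
    refine CostCoeffs.ext rfl rfl rfl (funext fun i => ?_) (funext fun i => ?_)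
      (funext fun i => funext fun j => ?_)
    · cases i using Fin.cases <;> rfl
    · cases i using Fin.cases <;> rfl
    cases i using Fin.cases <;> cases j using Fin.cases
    case zero.succ j =>
      simp only [R', CostCoeffs.sub_def, CostCoeffs.gain, Pi.sub_apply, Fin.val_zero, Fin.val_succ,
        Nat.add_one_ne_zero, dite_true, dite_false, transpose_sub, transpose_mul,
        transpose_transpose, hHsymm.eq, Matrix.mul_assoc]
      rfl
    all_goals rfl
  have hL : L = -(H⁻¹ * P.gradState) := by
    simp only [L, LQStage.gradState, Matrix.mul_assoc]
    rfl
  have hu : H *ᵥ (Istar + L *ᵥ x + ∑ i, M i *ᵥ w i) =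
      -(P.gradConst + P.gradState *ᵥ x + ∑ i, P.gradDelay i *ᵥ w i) := by
    rw [hL, hM]
    exact mulVec_nonsing_inv_affine hdet _ _ _ x w
  set u := Istar + L *ᵥ x + ∑ i, M i *ᵥ w i
  calc J x u w
      = P.cost x 0 w + u ⬝ᵥ (H *ᵥ u)
          + 2 * (u ⬝ᵥ (P.gradConst + P.gradState *ᵥ x + ∑ i, P.gradDelay i *ᵥ w i)) :=
        (hJ u).trans (P.cost_eq_cost_zero_add hS hR x u w)
    _ = P.baseCoeffs.eval x w - u ⬝ᵥ (H *ᵥ u) := by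
        rw [P.cost_zero_eq_eval_baseCoeffs hS, ← neg_neg (_ + _ + ∑ i, _), ← hu,
          dotProduct_neg]
        ring
    _ = (P.baseCoeffs - .gain H Istar L M).eval x w := by
        rw [CostCoeffs.eval_sub, CostCoeffs.eval_gain hHsymm]
    _ = _ := by rw [← hcoeffs]; rfl
end

section
/- Let 1 ≤ m ≤ l-1, and consider the Case-2 coefficient update of Theorem 1: given d×d matrices M^1,…,M^{l-1} with M^i = -H⁻¹((B⁰)ᵀR̃^{i-1} + R^{(l-1)(i-1)}) (H invertible), and updated coefficients r'^i = r^{i-1} - (M^i)ᵀH I•, R̃'^i = AᵀR̃^{i-1} - LᵀH M^i, R'^{ij} = R^{(i-1)(j-1)} - (M^i)ᵀH M^j (for i,j ≥ 1), R'^{i0} = (R̃^{i-1})ᵀB¹ - (M^i)ᵀH M⁰ and R'^{0i} = (R'^{i0})ᵀ. If the input coefficients vanish at high indices, i.e. R̃^i = 0 and r^i = 0 for all m ≤ i ≤ l-1, and R^{ij} = 0 whenever m ≤ i ≤ l-1 or m ≤ j ≤ l-1, then M^i = 0 for all i ≥ m+1, and the updated coefficients satisfy R̃'^i = 0, r'^i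 = 0 for all m+1 ≤ i ≤ l-1, and R'^{ij} = 0 whenever m+1 ≤ i ≤ l-1 or m+1 ≤ j ≤ l-1. -/
open Matrix

/-- Final claim of the appendix: if the cost-to-go coefficients
`R̃^i, r^i` vanish for `m ≤ i ≤ l-1` and `R^{ij}` vanishes whenever `m ≤ i` or
`m ≤ j`, then in the Case-2 backward step of recursion (8) the matrices `M^i`
vanish for `i ≥ m+1`, and the updated coefficients `R̃'^i, r'^i` vanish for
`m+1 ≤ i ≤ l-1`, while `R'^{ij}` vanishes whenever `m+1 ≤ i` or `m+1 ≤ j`. -/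
theorem vanishing_pattern_preserved {n d l m : ℕ} (hm : 1 ≤ m) (hml : m ≤ l - 1)
    (H : Matrix (Fin d) (Fin d) ℝ) (hH : IsUnit H)
    (Istar : Fin d → ℝ) (L : Matrix (Fin d) (Fin n) ℝ)
    (A : Matrix (Fin n) (Fin n) ℝ) (B0 B1 : Matrix (Fin n) (Fin d) ℝ)
    (M0 : Matrix (Fin d) (Fin d) ℝ)
    (Rt : Fin l → Matrix (Fin n) (Fin d) ℝ) (r : Fin l → Fin d → ℝ)
    (R : Fin l → Fin l → Matrix (Fin d) (Fin d) ℝ)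
    (hRt0 : ∀ i : Fin l, m ≤ (i : ℕ) → Rt i = 0)
    (hr0 : ∀ i : Fin l, m ≤ (i : ℕ) → r i = 0)
    (hR0 : ∀ i j : Fin l, m ≤ (i : ℕ) ∨ m ≤ (j : ℕ) → R i j = 0) :
    let last : Fin l := ⟨l - 1, by omega⟩
    -- `M i = M⁰` for `i = 0` and `M^i = -H⁻¹((B⁰)ᵀR̃^{i-1} + R^{(l-1)(i-1)})` for `i ≥ 1`
    let M : Fin l → Matrix (Fin d) (Fin d) ℝ := fun i =>
      if _h : (i : ℕ) = 0 then M0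
      else -(H⁻¹ * (B0ᵀ * Rt ⟨(i : ℕ) - 1, Nat.lt_of_le_of_lt (Nat.sub_le _ _) i.isLt⟩
        + R last ⟨(i : ℕ) - 1, Nat.lt_of_le_of_lt (Nat.sub_le _ _) i.isLt⟩))
    -- updated coefficients (for indices `i ≥ 1`): `r'^i = r^{i-1} - (M^i)ᵀHI•`
    let r' : Fin l → Fin d → ℝ := fun i =>
      r ⟨(i : ℕ) - 1, Nat.lt_of_le_of_lt (Nat.sub_le _ _) i.isLt⟩
        - (M i)ᵀ *ᵥ (H *ᵥ Istar)
    -- `R̃'^i = AᵀR̃^{i-1} - LᵀHM^i`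
    let Rt' : Fin l → Matrix (Fin n) (Fin d) ℝ := fun i =>
      Aᵀ * Rt ⟨(i : ℕ) - 1, Nat.lt_of_le_of_lt (Nat.sub_le _ _) i.isLt⟩ - Lᵀ * H * M i
    -- `R'^{i0} = (R̃^{i-1})ᵀB¹ - (M^i)ᵀHM⁰`, `R'^{0i} = (R'^{i0})ᵀ`,
    -- and `R'^{ij} = R^{(i-1)(j-1)} - (M^i)ᵀHM^j` for `i, j ≥ 1`
    let R'i0 : Fin l → Matrix (Fin d) (Fin d) ℝ := fun i =>
      (Rt ⟨(i : ℕ) - 1, Nat.lt_of_le_of_lt (Nat.sub_le _ _) i.isLt⟩)ᵀ * B1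
        - (M i)ᵀ * H * M0
    let R' : Fin l → Fin l → Matrix (Fin d) (Fin d) ℝ := fun i j =>
      if _hi : (i : ℕ) = 0 then (R'i0 j)ᵀ
      else
        if _hj : (j : ℕ) = 0 then R'i0 i
        else R ⟨(i : ℕ) - 1, Nat.lt_of_le_of_lt (Nat.sub_le _ _) i.isLt⟩
            ⟨(j : ℕ) - 1, Nat.lt_of_le_of_lt (Nat.sub_le _ _) j.isLt⟩
          - (M i)ᵀ * H * M j
    (∀ i : Fin l, m + 1 ≤ (i : ℕ) → M i = 0 ∧ Rt' i = 0 ∧ r' i = 0) ∧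
      (∀ i j : Fin l, m + 1 ≤ (i : ℕ) ∨ m + 1 ≤ (j : ℕ) → R' i j = 0) := by

  intro last M r' Rt' R'i0 R'
  have hRt' : ∀ (i : Fin l) (h : (i:ℕ) - 1 < l), m + 1 ≤ (i:ℕ) →
      Rt ⟨(i:ℕ) - 1, h⟩ = 0 := fun i h hi => hRt0 _ (by simp; omega)
  have hr' : ∀ (i : Fin l) (h : (i:ℕ) - 1 < l), m + 1 ≤ (i:ℕ) →
      r ⟨(i:ℕ) - 1, h⟩ = 0 := fun i h hi => hr0 _ (by simp; omega)
  have hM : ∀ i : Fin l, m + 1 ≤ (i : ℕ) → M i = 0 := by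
    intro i hi
    have h0 : (i : ℕ) ≠ 0 := by omega
    simp only [M, dif_neg h0]
    rw [hRt' i _ hi, hR0 last _ (Or.inl (by simp [last]; omega))]
    simp
  refine ⟨fun i hi => ⟨hM i hi, ?_, ?_⟩, ?_⟩
  · simp only [Rt', hM i hi]
    rw [hRt' i _ hi]
    simp
  · simp only [r', hM i hi]
    rw [hr' i _ hi]
    simp
  · intro i j hij
    simp only [R']
    by_cases hi0 : (i : ℕ) = 0
    · have hj : m + 1 ≤ (j : ℕ) := by omega
      simp only [dif_pos hi0, R'i0, hM j hj]
      rw [hRt' j _ hj]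
      simp
    · simp only [dif_neg hi0]
      by_cases hj0 : (j : ℕ) = 0
      · have hi : m + 1 ≤ (i : ℕ) := by omega
        simp only [dif_pos hj0, R'i0, hM i hi]
        rw [hRt' i _ hi]
        simp
      · simp only [dif_neg hj0]
        rcases hij with hij | hij
        · rw [hR0 _ _ (Or.inl (by simp; omega)), hM i hij]
          simp
        · rw [hR0 _ _ (Or.inr (by simp; omega)), hM j hij]
          simp
end
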